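/- For all real numbers t < T, x, k, the map σ ↦ BS(t,T,x,k,σ) is a continuous, strictly increasing bijection from (0,∞) onto the open interval (max(e^x − e^k, 0), e^x); in particular lim_{σ→0⁺} BS(t,T,x,k,σ) = max(e^x − e^k, 0) and lim_{σ→∞} BS(t,T,x,k,σ) = e^x, so the inverse BS^{−1}(t,T,x,k,·) : (max(e^x − e^k, 0), e^x) → (0,∞) is well defined. -/

import Mathlib

noncomputable section

/-- Standard normal density. -/
def phi (z : ℝ) : ℝ := (Real.sqrt (2 * Real.pi))⁻¹ * Real.exp (-z ^ 2 / 2)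

/-- Standard normal cumulative distribution function. -/
def N (y : ℝ) : ℝ := ∫ z in Set.Iic y, phi z

/-- Black–Scholes auxiliary quantity `d₁`. -/
def d1 (t T x k σ : ℝ) : ℝ :=
  (x - k) / (σ * Real.sqrt (T - t)) + σ * Real.sqrt (T - t) / 2

/-- Black–Scholes auxiliary quantity `d₂`. -/
def d2 (t T x k σ : ℝ) : ℝ :=
  (x - k) / (σ * Real.sqrt (T - t)) - σ * Real.sqrt (T - t) / 2

/-- Black–Scholes call price with log-spot `x`, log-strike `k`,
time to maturity `T - t` and volatility `σ`. -/
def BS (t T x k σ : ℝ) : ℝ :=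
  Real.exp x * N (d1 t T x k σ) - Real.exp k * N (d2 t T x k σ)

/-!
`BS` depends on `σ` only through the total volatility `v = σ √(T - t)`, so it suffices to study
`v ↦ e^x N(d₁) - e^k N(d₂)` on `(0, ∞)`. Since `d₁ - d₂ = v`, the identity `e^x φ(d₁) = e^k φ(d₂)`
makes all other terms of the derivative cancel, leaving the vega `e^x φ(d₁) > 0`. As `v → ∞`,
`d₁ → ∞` and `d₂ → -∞`; as `v → 0⁺`, both tend to `+∞`, `0` or `-∞` according to the sign of
`x - k`, which gives the limit `max (e^x - e^k) 0`. A continuous strictly increasing function on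
an open half-line is a bijection onto the open interval between its two limits.
-/

open Real Filter Set MeasureTheory ProbabilityTheory Topology

section IncreasingBijection

variable {α δ : Type*} [LinearOrder δ] [TopologicalSpace δ] [OrderClosedTopology δ]
  {f : α → δ} {a b : δ} {c : α}

lemma StrictMonoOn.lt_of_tendsto_atTop [LinearOrder α] [NoMaxOrder α] (hf : StrictMonoOn f (Ioi c))
    (hb : Tendsto f atTop (𝓝 b)) {s : α} (hs : s ∈ Ioi c) : f s < b := by
  have : Nonempty α := ⟨c⟩
  obtain ⟨s', hss'⟩ := exists_gt s
  have hs' : s' ∈ Ioi c := lt_trans hs hss'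
  refine (hf hs hs' hss').trans_le (ge_of_tendsto hb ?_)
  filter_upwards [eventually_ge_atTop s'] with z hz
  exact hf.monotoneOn hs' (lt_of_lt_of_le hs' hz) hz

lemma StrictMonoOn.lt_of_tendsto_nhdsGT [LinearOrder α] [TopologicalSpace α] [OrderTopology α]
    [DenselyOrdered α] (hf : StrictMonoOn f (Ioi c))
    (ha : Tendsto f (𝓝[>] c) (𝓝 a)) {s : α} (hs : s ∈ Ioi c) : a < f s := by
  have := nhdsGT_neBot_of_exists_gt ⟨s, hs⟩
  obtain ⟨s', hcs', hs's⟩ := exists_between (mem_Ioi.1 hs)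
  refine lt_of_le_of_lt (le_of_tendsto ha ?_) (hf hcs' hs hs's)
  filter_upwards [Ioo_mem_nhdsGT hcs'] with z hz
  exact (hf hz.1 hcs' hz.2).le

lemma StrictMonoOn.bijOn_Ioi_Ioo [ConditionallyCompleteLinearOrder α] [TopologicalSpace α]
    [OrderTopology α] [DenselyOrdered α] [NoMaxOrder α] (hf : StrictMonoOn f (Ioi c))
    (hcont : ContinuousOn f (Ioi c))
    (ha : Tendsto f (𝓝[>] c) (𝓝 a)) (hb : Tendsto f atTop (𝓝 b)) :
    BijOn f (Ioi c) (Ioo a b) := by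
  refine ⟨fun s hs => ⟨hf.lt_of_tendsto_nhdsGT ha hs, hf.lt_of_tendsto_atTop hb hs⟩,
    hf.injOn, fun y hy => ?_⟩
  obtain ⟨s₁, hs₁y, hs₁⟩ := ((ha.eventually_lt_const hy.1).and self_mem_nhdsWithin).exists
  obtain ⟨s₂, hs₁s₂, hys₂⟩ :=
    ((eventually_ge_atTop s₁).and (hb.eventually_const_lt hy.2)).exists
  exact hcont.surjOn_Icc hs₁ (lt_of_lt_of_le hs₁ hs₁s₂) ⟨hs₁y.le, hys₂.le⟩

end IncreasingBijection

lemma phi_eq_gaussianPDFReal : phi = gaussianPDFReal 0 1 := by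
  ext z
  simp [phi, gaussianPDFReal]

lemma phi_pos (z : ℝ) : 0 < phi z := by
  rw [phi_eq_gaussianPDFReal]
  exact gaussianPDFReal_pos _ _ _ one_ne_zero

lemma continuous_phi : Continuous phi := by
  unfold phi
  fun_prop

lemma integrable_phi : Integrable phi := by
  rw [phi_eq_gaussianPDFReal]
  exact integrable_gaussianPDFReal _ _

lemma N_eq_cdf_gaussianReal : N = cdf (gaussianReal 0 1) := by
  ext y
  rw [cdf_eq_real, measureReal_def, gaussianReal_apply_eq_integral _ one_ne_zero,
    ENNReal.toReal_ofReal (setIntegral_nonneg measurableSet_Iic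
      fun z _ => gaussianPDFReal_nonneg _ _ z), N, phi_eq_gaussianPDFReal]

lemma hasDerivAt_N (y : ℝ) : HasDerivAt N (phi y) y := by
  have hN : ∀ u, N u = N 0 + ∫ z in (0 : ℝ)..u, phi z := fun u => by
    rw [N, N, intervalIntegral.integral_Iic_sub_Iic integrable_phi.integrableOn
      integrable_phi.integrableOn |>.symm]
    ring
  exact ((continuous_phi.integral_hasStrictDerivAt 0 y).hasDerivAt.const_add (N 0)).congr_of_eventuallyEq
    (.of_forall hN)

lemma continuous_N : Continuous N :=
  continuous_iff_continuousAt.2 fun y => (hasDerivAt_N y).continuousAt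

lemma tendsto_N_atTop : Tendsto N atTop (𝓝 1) :=
  N_eq_cdf_gaussianReal ▸ tendsto_cdf_atTop _

lemma tendsto_N_atBot : Tendsto N atBot (𝓝 0) :=
  N_eq_cdf_gaussianReal ▸ tendsto_cdf_atBot _

/-- The Black–Scholes price as a function of the total volatility `v = σ √(T - t)`:
`BS t T x k σ = callPrice x k (σ * √(T - t))` holds by definition. -/
def callPrice (x k v : ℝ) : ℝ :=
  exp x * N ((x - k) / v + v / 2) - exp k * N ((x - k) / v - v / 2)

section CallPrice

variable {x k v : ℝ}

lemma exp_mul_phi_d1_eq (hv : v ≠ 0) :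
    exp x * phi ((x - k) / v + v / 2) = exp k * phi ((x - k) / v - v / 2) := by
  simp only [phi, mul_left_comm (exp _), ← exp_add]
  congr 2
  field_simp
  ring

lemma hasDerivAt_callPrice (hv : v ≠ 0) :
    HasDerivAt (callPrice x k) (exp x * phi ((x - k) / v + v / 2)) v := by
  obtain ⟨m', hm⟩ : ∃ m', HasDerivAt (fun w => (x - k) / w) m' v :=
    ⟨_, (differentiableAt_const _ |>.div differentiableAt_id hv).hasDerivAt⟩
  have hw : HasDerivAt (fun w : ℝ => w / 2) (1 / 2) v := (hasDerivAt_id v).div_const 2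
  have h : HasDerivAt (callPrice x k) (exp x * (phi ((x - k) / v + v / 2) * (m' + 1 / 2)) -
      exp k * (phi ((x - k) / v - v / 2) * (m' - 1 / 2))) v :=
    (((hasDerivAt_N _).comp v (hm.add hw)).const_mul _).sub
      (((hasDerivAt_N _).comp v (hm.sub hw)).const_mul _)
  convert h using 1
  linear_combination (1 / 2 - m') * exp_mul_phi_d1_eq (x := x) (k := k) hv

lemma continuousOn_callPrice : ContinuousOn (callPrice x k) (Ioi 0) :=
  fun _ hv => (hasDerivAt_callPrice (ne_of_gt hv)).continuousAt.continuousWithinAt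

lemma strictMonoOn_callPrice : StrictMonoOn (callPrice x k) (Ioi 0) := by
  refine strictMonoOn_of_deriv_pos (convex_Ioi 0) continuousOn_callPrice fun v hv => ?_
  rw [interior_Ioi] at hv
  rw [(hasDerivAt_callPrice (ne_of_gt hv)).deriv]
  exact mul_pos (exp_pos x) (phi_pos _)

lemma tendsto_callPrice {l : Filter ℝ} {p q : ℝ}
    (h₁ : Tendsto (fun v => N ((x - k) / v + v / 2)) l (𝓝 p))
    (h₂ : Tendsto (fun v => N ((x - k) / v - v / 2)) l (𝓝 q)) :
    Tendsto (callPrice x k) l (𝓝 (exp x * p - exp k * q)) :=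
  (h₁.const_mul _).sub (h₂.const_mul _)

lemma tendsto_callPrice_atTop : Tendsto (callPrice x k) atTop (𝓝 (exp x)) := by
  have hm : Tendsto (fun v : ℝ => (x - k) / v) atTop (𝓝 0) :=
    tendsto_const_nhds.div_atTop tendsto_id
  have hw : Tendsto (fun v : ℝ => v / 2) atTop atTop := tendsto_id.atTop_div_const two_pos
  simpa using tendsto_callPrice (tendsto_N_atTop.comp (hm.add_atTop hw))
    (tendsto_N_atBot.comp <| by
      simpa only [sub_eq_add_neg] using hm.add_atBot (tendsto_neg_atBot_iff.2 hw))

lemma tendsto_callPrice_nhdsGT_zero :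
    Tendsto (callPrice x k) (𝓝[>] 0) (𝓝 (max (exp x - exp k) 0)) := by
  have hw : Tendsto (fun v : ℝ => v / 2) (𝓝[>] 0) (𝓝 0) :=
    ((continuous_id.div_const 2).tendsto' 0 0 (zero_div 2)).mono_left nhdsWithin_le_nhds
  rcases lt_trichotomy x k with hxk | rfl | hxk
  · have hm : Tendsto (fun v : ℝ => (x - k) / v) (𝓝[>] 0) atBot := by
      simpa only [div_eq_mul_inv] using
        tendsto_inv_nhdsGT_zero.const_mul_atTop_of_neg (sub_neg.2 hxk)
    rw [max_eq_right (sub_nonpos.2 (exp_le_exp.2 hxk.le))]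
    simpa using tendsto_callPrice (tendsto_N_atBot.comp (hm.atBot_add hw))
      (tendsto_N_atBot.comp (by simpa only [sub_eq_add_neg] using hm.atBot_add hw.neg))
  · simpa using tendsto_callPrice (x := x) (k := x)
      ((continuous_N.tendsto 0).comp (by simpa using hw))
      ((continuous_N.tendsto 0).comp (by simpa using hw.neg))
  · have hm : Tendsto (fun v : ℝ => (x - k) / v) (𝓝[>] 0) atTop := by
      simpa only [div_eq_mul_inv] using tendsto_inv_nhdsGT_zero.const_mul_atTop (sub_pos.2 hxk)
    rw [max_eq_left (sub_nonneg.2 (exp_le_exp.2 hxk.le))]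
    simpa using tendsto_callPrice (tendsto_N_atTop.comp (hm.atTop_add hw))
      (tendsto_N_atTop.comp (by simpa only [sub_eq_add_neg] using hm.atTop_add hw.neg))

end CallPrice

theorem bs_strictMono_bijection (t T x k : ℝ) (htT : t < T) :
    StrictMonoOn (BS t T x k) (Set.Ioi 0) ∧
    ContinuousOn (BS t T x k) (Set.Ioi 0) ∧
    Set.BijOn (BS t T x k) (Set.Ioi 0)
      (Set.Ioo (max (Real.exp x - Real.exp k) 0) (Real.exp x)) ∧
    Filter.Tendsto (BS t T x k) (nhdsWithin 0 (Set.Ioi 0))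
      (nhds (max (Real.exp x - Real.exp k) 0)) ∧
    Filter.Tendsto (BS t T x k) Filter.atTop (nhds (Real.exp x)) := by
  have hτ : 0 < √(T - t) := sqrt_pos.2 (sub_pos.2 htT)
  have hmaps : MapsTo (· * √(T - t)) (Ioi 0) (Ioi 0) := fun _ hσ => mul_pos hσ hτ
  have hmono : StrictMonoOn (BS t T x k) (Ioi 0) :=
    strictMonoOn_callPrice.comp ((strictMono_mul_right_of_pos hτ).strictMonoOn _) hmaps
  have hcont : ContinuousOn (BS t T x k) (Ioi 0) :=
    continuousOn_callPrice.comp (continuous_mul_const _).continuousOn hmaps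
  have hzero : Tendsto (BS t T x k) (𝓝[>] 0) (𝓝 (max (exp x - exp k) 0)) :=
    tendsto_callPrice_nhdsGT_zero.comp <| tendsto_nhdsWithin_iff.2
      ⟨((continuous_mul_const _).tendsto' 0 0 (zero_mul _)).mono_left nhdsWithin_le_nhds,
        eventually_nhdsWithin_of_forall hmaps⟩
  have htop : Tendsto (BS t T x k) atTop (𝓝 (exp x)) :=
    tendsto_callPrice_atTop.comp (tendsto_id.atTop_mul_const hτ)
  exact ⟨hmono, hcont, hmono.bijOn_Ioi_Ioo hcont hzero htop, hzero, htop⟩
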